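/- Let $m \geq 1$ and let $E_x$ be the $m \times m$ lower triangular matrix with $(i,j)$-entry $(-1)^{i-j} E_{i-j,[0,i[}$ (signed elementary symmetric polynomials in $x_0, \dots, x_{i-1}$), and $P_x$ the matrix with $(i,j)$-entry $P_{i-j,[0,j]}$ (complete homogeneous symmetric polynomials in $x_0, \dots, x_j$). Then $E_x P_x = I$. -/

import Mathlib

open MvPolynomial in
/-- Elementary symmetric polynomial `E_{d,s}`, zero for `d < 0`. -/
noncomputable def Esym (d : ℤ) (s : Finset ℕ) : MvPolynomial ℕ ℤ :=
  if 0 ≤ d then ∑ t ∈ s.powersetCard d.toNat, ∏ i ∈ t, X i else 0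

open MvPolynomial in
/-- Complete homogeneous symmetric polynomial `P_{d,s}`, zero for `d < 0`. -/
noncomputable def Hsym (d : ℤ) (s : Finset ℕ) : MvPolynomial ℕ ℤ :=
  if 0 ≤ d then ∑ m ∈ s.sym d.toNat, ((m : Multiset ℕ).map X).prod else 0

/-!
Entry `(i, j)` of `E_x P_x` is the convolution `∑_{a+b=i-j} (-1)^a e_a(A) h_b(B)` with
`A = {x_0, …, x_{i-1}}` and `B = {x_0, …, x_j}`. For nested alphabets `B ⊆ A` this sum is
`(-1)^n e_n(A \ B)`, the coefficient of `t^n` in `∏_A (1 - x t) / ∏_B (1 - x t)`; it is proved by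
induction on `B` from `h_{b+1}(B ∪ {c}) = h_{b+1}(B) + x_c h_b(B ∪ {c})`. When `j < i` the
alphabet `A \ B = {x_{j+1}, …, x_{i-1}}` has only `i - j - 1` letters, so `e_{i-j}` of it vanishes.
-/

open MvPolynomial Finset

lemma Finset.sym_succ_insert {ι : Type*} [DecidableEq ι] (a : ι) (s : Finset ι) (d : ℕ) :
    (insert a s).sym (d + 1) = s.sym (d + 1) ∪ ((insert a s).sym d).image (Sym.cons a) := by
  ext m
  simp only [mem_union, mem_image, mem_sym_iff, mem_insert]
  constructor
  · intro hm
    by_cases ham : a ∈ m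
    · refine .inr ⟨m.erase a ham, fun b hb => hm b ?_, Sym.cons_erase ham⟩
      exact Multiset.mem_of_mem_erase (show b ∈ (m : Multiset ι).erase a by rwa [← Sym.coe_erase])
    · exact .inl fun b hb => (hm b hb).resolve_left (by rintro rfl; exact ham hb)
  · rintro (hm | ⟨m, hm, rfl⟩) b hb
    · exact .inr (hm b hb)
    · rcases Sym.mem_cons.1 hb with rfl | hb
      exacts [.inl rfl, hm b hb]

lemma Finset.disjoint_sym_image_cons_insert {ι : Type*} [DecidableEq ι] {a : ι} {s : Finset ι}
    (ha : a ∉ s) (d : ℕ) :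
    Disjoint (s.sym (d + 1)) (((insert a s).sym d).image (Sym.cons a)) := by
  simp only [disjoint_right, mem_image, mem_sym_iff]
  rintro _ ⟨m, -, rfl⟩ h
  exact ha (h a (Sym.mem_cons_self a m))

section SymmetricPolynomials

variable {ι R : Type*} [CommSemiring R] (x : ι → R)

def esymmOn (d : ℕ) (s : Finset ι) : R :=
  ∑ t ∈ s.powersetCard d, ∏ i ∈ t, x i

def hsymmOn [DecidableEq ι] (d : ℕ) (s : Finset ι) : R :=
  ∑ m ∈ s.sym d, ((m : Multiset ι).map x).prod

@[simp] lemma esymmOn_zero (s : Finset ι) : esymmOn x 0 s = 1 := by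
  simp [esymmOn]

lemma esymmOn_eq_zero_of_card_lt {d : ℕ} {s : Finset ι} (h : #s < d) : esymmOn x d s = 0 := by
  simp [esymmOn, powersetCard_eq_empty.2 h]

lemma esymmOn_succ_insert [DecidableEq ι] {a : ι} {s : Finset ι} (ha : a ∉ s) (d : ℕ) :
    esymmOn x (d + 1) (insert a s) = esymmOn x (d + 1) s + x a * esymmOn x d s := by
  simp only [esymmOn, ← esymm_map_val, insert_val_of_notMem ha, Multiset.map_cons,
    Multiset.esymm, Multiset.powersetCard_cons, Multiset.map_add, Multiset.sum_add,
    Multiset.map_map]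
  simp [Multiset.sum_map_mul_left]

variable [DecidableEq ι]

@[simp] lemma hsymmOn_zero (s : Finset ι) : hsymmOn x 0 s = 1 := by
  simp [hsymmOn, Sym.eq_nil_of_card_zero]

@[simp] lemma hsymmOn_succ_empty (d : ℕ) : hsymmOn x (d + 1) (∅ : Finset ι) = 0 := by
  simp [hsymmOn]

lemma hsymmOn_succ_insert {a : ι} {s : Finset ι} (ha : a ∉ s) (d : ℕ) :
    hsymmOn x (d + 1) (insert a s) = hsymmOn x (d + 1) s + x a * hsymmOn x d (insert a s) := by
  rw [hsymmOn, sym_succ_insert, sum_union (disjoint_sym_image_cons_insert ha d),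
    sum_image fun _ _ _ _ => (Sym.cons_inj_right a _ _).1, hsymmOn, hsymmOn, mul_sum]
  simp [Sym.coe_cons]

end SymmetricPolynomials

section Duality

variable {ι R : Type*} [CommRing R] [DecidableEq ι] (x : ι → R)

theorem sum_antidiagonal_esymmOn_mul_hsymmOn {A B : Finset ι} (hBA : B ⊆ A) (n : ℕ) :
    ∑ p ∈ antidiagonal n, (-1) ^ p.1 * esymmOn x p.1 A * hsymmOn x p.2 B
      = (-1) ^ n * esymmOn x n (A \ B) := by
  induction B using Finset.induction_on generalizing n with
  | empty => cases n <;> simp [Nat.sum_antidiagonal_succ']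
  | insert b B hb ih =>
    have hbA : b ∈ A := hBA (mem_insert_self b B)
    have hsplit : A \ B = insert b (A \ insert b B) := by
      rw [sdiff_insert, insert_erase (mem_sdiff.2 ⟨hbA, hb⟩)]
    have hB := ih ((subset_insert b B).trans hBA)
    induction n with
    | zero => simp
    | succ n ihn =>
      have hBn := hB (n + 1)
      rw [Nat.sum_antidiagonal_succ', hsplit,
        esymmOn_succ_insert x (fun h => (mem_sdiff.1 h).2 (mem_insert_self b B))] at hBn
      simp only [Nat.sum_antidiagonal_succ', hsymmOn_succ_insert x hb, hsymmOn_zero, mul_add,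
        sum_add_distrib]
      have hshift : ∑ p ∈ antidiagonal n,
          (-1) ^ p.1 * esymmOn x p.1 A * (x b * hsymmOn x p.2 (insert b B))
            = x b * ((-1) ^ n * esymmOn x n (A \ insert b B)) := by
        rw [← ihn, mul_sum]
        exact sum_congr rfl fun _ _ => by ring
      simp only [hsymmOn_zero] at hBn
      linear_combination hBn + hshift

end Duality

section Convolution

variable {R : Type*} [Semiring R] {f g : ℤ → R}

lemma sum_range_mul_sub_eq_zero_of_lt (hf : ∀ z < 0, f z = 0) (hg : ∀ z < 0, g z = 0)
    {i j : ℕ} (hij : i < j) (m : ℕ) : ∑ k ∈ range m, f (i - k) * g (k - j) = 0 :=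
  sum_eq_zero fun k _ => by
    rcases le_or_gt k i with hki | hik
    · rw [hg _ (by omega), mul_zero]
    · rw [hf _ (by omega), zero_mul]

lemma sum_range_mul_sub_eq_sum_antidiagonal (hf : ∀ z < 0, f z = 0) (hg : ∀ z < 0, g z = 0)
    {i j m : ℕ} (hji : j ≤ i) (him : i < m) :
    ∑ k ∈ range m, f (i - k) * g (k - j) = ∑ p ∈ antidiagonal (i - j), f p.1 * g p.2 := by
  have hvanish : ∀ k ∈ range m, k ∉ Ico j (i + 1) → f (i - k) * g (k - j) = 0 := by
    intro k _ hk
    rcases lt_or_ge k j with hkj | hjk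
    · rw [hg _ (by omega), mul_zero]
    · rw [hf _ (by simp only [mem_Ico] at hk; omega), zero_mul]
  calc ∑ k ∈ range m, f (i - k) * g (k - j)
      = ∑ k ∈ Ico j (i + 1), f (i - k) * g (k - j) :=
        (sum_subset (fun k hk => mem_range.2 (by simp only [mem_Ico] at hk; omega)) hvanish).symm
    _ = ∑ d ∈ range (i - j).succ, f ↑(i - j - d) * g ↑d := by
        rw [sum_Ico_eq_sum_range, show i + 1 - j = (i - j).succ by omega]
        refine sum_congr rfl fun d hd => ?_
        simp only [mem_range] at hd
        congr 2 <;> omega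
    _ = ∑ p ∈ antidiagonal (i - j), f p.1 * g p.2 := by
        rw [← Nat.sum_antidiagonal_eq_sum_range_succ (fun a b => f b * g a),
          ← Nat.sum_antidiagonal_swap]
        rfl

end Convolution

lemma Esym_natCast (d : ℕ) (s : Finset ℕ) : Esym d s = esymmOn X d s := by
  simp [Esym, esymmOn]

lemma Hsym_natCast (d : ℕ) (s : Finset ℕ) : Hsym d s = hsymmOn X d s := by
  simp [Hsym, hsymmOn]

lemma Esym_of_neg {d : ℤ} (hd : d < 0) (s : Finset ℕ) : Esym d s = 0 := if_neg hd.not_ge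

lemma Hsym_of_neg {d : ℤ} (hd : d < 0) (s : Finset ℕ) : Hsym d s = 0 := if_neg hd.not_ge

theorem stmt_5_general (m : ℕ) :
    (Matrix.of fun i j : Fin m =>
        MvPolynomial.C ((((-1 : ℤˣ) ^ ((i : ℤ) - (j : ℤ)) : ℤˣ) : ℤ))
          * Esym ((i : ℤ) - (j : ℤ)) (Finset.Ico 0 (i : ℕ)))
      * (Matrix.of fun i j : Fin m => Hsym ((i : ℤ) - (j : ℤ)) (Finset.Icc 0 (j : ℕ)))
      = 1 := by
  refine Matrix.ext fun i j => ?_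
  set f : ℤ → MvPolynomial ℕ ℤ := fun z => C (((-1 : ℤˣ) ^ z : ℤˣ) : ℤ) * Esym z (Ico 0 i)
  set g : ℤ → MvPolynomial ℕ ℤ := fun z => Hsym z (Icc 0 j)
  have hf : ∀ z < 0, f z = 0 := fun z hz => by simp [f, Esym_of_neg hz]
  have hg : ∀ z < 0, g z = 0 := fun z hz => Hsym_of_neg hz _
  rw [Matrix.mul_apply, Matrix.one_apply]
  change ∑ k : Fin m, f (i - k) * g (k - j) = _
  rw [Fin.sum_univ_eq_sum_range (fun k : ℕ => f (i - k) * g (k - j))]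
  rcases lt_trichotomy (i : ℕ) j with hij | hij | hij
  · rw [sum_range_mul_sub_eq_zero_of_lt hf hg hij, if_neg (Fin.val_ne_iff.1 hij.ne)]
  · rw [sum_range_mul_sub_eq_sum_antidiagonal hf hg hij.ge i.isLt, if_pos (Fin.ext hij)]
    simp [hij, f, g, Esym, Hsym, Sym.eq_nil_of_card_zero, Sym.coe_nil]
  · rw [sum_range_mul_sub_eq_sum_antidiagonal hf hg hij.le i.isLt,
      if_neg (Fin.val_ne_iff.1 hij.ne')]
    have hterm : ∀ p ∈ antidiagonal (i - j : ℕ), f p.1 * g p.2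
        = (-1) ^ p.1 * esymmOn X p.1 (range i) * hsymmOn X p.2 (Icc 0 (j : ℕ)) := fun p _ => by
      simp [f, g, Esym_natCast, Hsym_natCast]
    have hsub : Icc 0 (j : ℕ) ⊆ range i := fun k hk => by
      simp only [mem_Icc, mem_range] at hk ⊢
      omega
    have hcard : #(range (i : ℕ) \ Icc 0 j) < i - j := by
      rw [card_sdiff_of_subset hsub, card_range, Nat.card_Icc]
      omega
    rw [sum_congr rfl hterm, sum_antidiagonal_esymmOn_mul_hsymmOn X hsub,
      esymmOn_eq_zero_of_card_lt X hcard, mul_zero]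

/-- `E_x P_x = I`, where `(E_x)_{ij} = (-1)^{i-j} E_{i-j,[0,i[}` and
`(P_x)_{ij} = P_{i-j,[0,j]}`. -/
theorem stmt_5 (m : ℕ) (hm : 1 ≤ m) :
    (Matrix.of fun i j : Fin m =>
        MvPolynomial.C ((((-1 : ℤˣ) ^ ((i : ℤ) - (j : ℤ)) : ℤˣ) : ℤ))
          * Esym ((i : ℤ) - (j : ℤ)) (Finset.Ico 0 (i : ℕ)))
      * (Matrix.of fun i j : Fin m => Hsym ((i : ℤ) - (j : ℤ)) (Finset.Icc 0 (j : ℕ)))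
      = 1 :=
  stmt_5_general m
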